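/- Let A, B ∈ M₅(ℝ) be defined in the standard basis e₁,…,e₅ by A = diag(−2,−1,−1,0,0) and B·e₁ = 2e₂, B·e₂ = e₄, B·e₃ = 2e₅, B·e₄ = B·e₅ = 0, and let W₀ = span(e₂,e₃,e₄,e₅) (which is invariant under both A and B). Then for every ℝ-linear endomorphism J₀ of span(e₂,e₃) with J₀∘J₀ = −id, there exists a unique ℝ-linear endomorphism J of W₀ such that J∘J = −id, J commutes with the restrictions of A and B to W₀, and J restricts to J₀ on span(e₂,e₃). (Hence the invariant complex structures on W₀ form a family parametrized exactly by the complex structures on span(e₂,e₃): J on span(e₂,e₃) determines J on span(e₄,e₅).) -/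

import Mathlib

open Matrix

/-- `A = diag(−2,−1,−1,0,0)`. -/
def Amat : Matrix (Fin 5) (Fin 5) ℝ := Matrix.diagonal ![-2, -1, -1, 0, 0]

/-- `B` with `B·e₁ = 2e₂`, `B·e₂ = e₄`, `B·e₃ = 2e₅`, `B·e₄ = B·e₅ = 0`. -/
def Bmat : Matrix (Fin 5) (Fin 5) ℝ :=
  !![0, 0, 0, 0, 0;
     2, 0, 0, 0, 0;
     0, 0, 0, 0, 0;
     0, 1, 0, 0, 0;
     0, 0, 2, 0, 0]

/-- `W₀ = span(e₂,e₃,e₄,e₅)`. -/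
noncomputable def W0 : Submodule ℝ (Fin 5 → ℝ) :=
  Submodule.span ℝ {(Pi.single 1 1 : Fin 5 → ℝ), Pi.single 2 1,
    Pi.single 3 1, Pi.single 4 1}

/-- `span(e₂,e₃)`. -/
noncomputable def V23 : Submodule ℝ (Fin 5 → ℝ) :=
  Submodule.span ℝ {(Pi.single 1 1 : Fin 5 → ℝ), Pi.single 2 1}

/-!
`B` maps `e₂, e₃` to `e₄, 2e₅`, so `W₀ = span(e₂,e₃) ⊕ B · span(e₂,e₃)`, and a map
commuting with `B` is therefore determined by its restriction to `span(e₂,e₃)`. Conversely, if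
`J₀` has matrix `M` with `M² = -1`, the block matrix with `M` on `span(e₂,e₃)` and its conjugate
by `B` on `span(e₄,e₅)` squares to `-1` on `W₀` and commutes with `B` and with `A`, which is
scalar on both blocks.
-/

theorem mem_W0_iff {x : Fin 5 → ℝ} : x ∈ W0 ↔ x 0 = 0 := by
  simp only [W0, Submodule.mem_span_insert, Submodule.mem_span_singleton]
  constructor
  · rintro ⟨a, _, ⟨b, _, ⟨c, _, ⟨d, rfl⟩, rfl⟩, rfl⟩, rfl⟩
    simp
  · intro hx
    refine ⟨x 1, _, ⟨x 2, _, ⟨x 3, _, ⟨x 4, rfl⟩, rfl⟩, rfl⟩, ?_⟩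
    ext i; fin_cases i <;> simp [hx]

theorem mem_V23_iff {x : Fin 5 → ℝ} : x ∈ V23 ↔ x 0 = 0 ∧ x 3 = 0 ∧ x 4 = 0 := by
  simp only [V23, Submodule.mem_span_pair]
  constructor
  · rintro ⟨a, b, rfl⟩
    simp
  · rintro ⟨h0, h3, h4⟩
    refine ⟨x 1, x 2, ?_⟩
    ext i; fin_cases i <;> simp [h0, h3, h4]

theorem V23_le_W0 : V23 ≤ W0 := fun _ hx => mem_W0_iff.2 (mem_V23_iff.1 hx).1

theorem W0_le_V23_sup_map_Bmat : W0 ≤ V23 ⊔ V23.map Bmat.mulVecLin := by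
  intro x hx
  rw [mem_W0_iff] at hx
  refine Submodule.mem_sup.2 ⟨![0, x 1, x 2, 0, 0], mem_V23_iff.2 ⟨rfl, rfl, rfl⟩,
    _, ⟨![0, x 3, x 4 / 2, 0, 0], mem_V23_iff.2 ⟨rfl, rfl, rfl⟩, rfl⟩, ?_⟩
  ext i; fin_cases i <;> simp [Bmat, hx]

theorem LinearMap.ext_of_eqOn_of_commute {R M : Type*} [Semiring R] [AddCommMonoid M]
    [Module R M] {V W : Submodule R M} {B : M →ₗ[R] M} (hB : ∀ x ∈ W, B x ∈ W) (hVW : V ≤ W)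
    (hW : W ≤ V ⊔ V.map B) {K K' : W →ₗ[R] W}
    (hK : ∀ x (hx : x ∈ W), (K ⟨B x, hB x hx⟩ : M) = B (K ⟨x, hx⟩))
    (hK' : ∀ x (hx : x ∈ W), (K' ⟨B x, hB x hx⟩ : M) = B (K' ⟨x, hx⟩))
    (hV : ∀ x (hx : x ∈ V), K ⟨x, hVW hx⟩ = K' ⟨x, hVW hx⟩) : K = K' := by
  ext ⟨x, hx⟩
  obtain ⟨y, hy, _, ⟨z, hz, rfl⟩, rfl⟩ := Submodule.mem_sup.1 (hW hx)
  have hsplit : (⟨y + B z, hx⟩ : W) = ⟨y, hVW hy⟩ + ⟨B z, hB z (hVW hz)⟩ := rfl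
  rw [hsplit, map_add, map_add, Submodule.coe_add, Submodule.coe_add, hK z (hVW hz),
    hK' z (hVW hz), hV y hy, hV z hz]

noncomputable def coordsV23 : V23 ≃ₗ[ℝ] (Fin 2 → ℝ) where
  toFun x := ![x.1 1, x.1 2]
  invFun c := ⟨![0, c 0, c 1, 0, 0], mem_V23_iff.2 ⟨rfl, rfl, rfl⟩⟩
  map_add' x y := by ext i; fin_cases i <;> simp
  map_smul' a x := by ext i; fin_cases i <;> simp
  left_inv x := by
    obtain ⟨h0, h3, h4⟩ := mem_V23_iff.1 x.2
    ext i; fin_cases i <;> simp [h0, h3, h4]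
  right_inv c := by ext i; fin_cases i <;> rfl

/-- If `J₀` has matrix `M` in the basis `e₂, e₃`, commuting with `B` (which sends `e₂, e₃` to
`e₄, 2e₅`) forces the matrix `diag(1,2) · M · diag(1,2)⁻¹` in the basis `e₄, e₅`. -/
noncomputable def extendMatrix (M : Matrix (Fin 2) (Fin 2) ℝ) : Matrix (Fin 5) (Fin 5) ℝ :=
  !![0, 0, 0, 0, 0;
     0, M 0 0, M 0 1, 0, 0;
     0, M 1 0, M 1 1, 0, 0;
     0, 0, 0, M 0 0, M 0 1 / 2;
     0, 0, 0, 2 * M 1 0, M 1 1]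

section extendMatrix

variable (M : Matrix (Fin 2) (Fin 2) ℝ)

theorem extendMatrix_mulVec_mem_W0 (x : Fin 5 → ℝ) : extendMatrix M *ᵥ x ∈ W0 := by
  simp [mem_W0_iff, extendMatrix, dotProduct, Fin.sum_univ_five]

theorem extendMatrix_mulVec_mulVec (hM : M * M = -1) {x : Fin 5 → ℝ} (hx : x ∈ W0) :
    extendMatrix M *ᵥ (extendMatrix M *ᵥ x) = -x := by
  have hM' := congrFun₂ hM
  simp only [mul_apply, Fin.sum_univ_two, Fin.isValue, Matrix.neg_apply, Matrix.one_apply,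
    Fin.forall_fin_two, ↓reduceIte, zero_ne_one, neg_zero, one_ne_zero] at hM'
  obtain ⟨⟨h00, h01⟩, h10, h11⟩ := hM'
  ext i
  fin_cases i <;> simp only [mulVec, dotProduct, extendMatrix, Fin.isValue, Fin.zero_eta,
    Fin.mk_one, Fin.reduceFinMk, of_apply, cons_val', cons_val_fin_one, cons_val, cons_val_zero,
    cons_val_one, Fin.sum_univ_five, mem_W0_iff.1 hx, mul_zero, zero_mul, zero_add, add_zero,
    Pi.neg_apply, neg_zero]
  · linear_combination x 1 * h00 + x 2 * h01
  · linear_combination x 1 * h10 + x 2 * h11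
  · linear_combination x 3 * h00 + x 4 * h01 / 2
  · linear_combination 2 * x 3 * h10 + x 4 * h11

theorem extendMatrix_mulVec_Amat_mulVec (x : Fin 5 → ℝ) :
    extendMatrix M *ᵥ (Amat *ᵥ x) = Amat *ᵥ (extendMatrix M *ᵥ x) := by
  ext i
  fin_cases i <;> simp [extendMatrix, Amat, mulVec, dotProduct, Fin.sum_univ_five] <;> ring

theorem extendMatrix_mulVec_Bmat_mulVec {x : Fin 5 → ℝ} (hx : x ∈ W0) :
    extendMatrix M *ᵥ (Bmat *ᵥ x) = Bmat *ᵥ (extendMatrix M *ᵥ x) := by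
  ext i
  fin_cases i <;>
    simp [extendMatrix, Bmat, mulVec, dotProduct, Fin.sum_univ_five, mem_W0_iff.1 hx] <;> ring

end extendMatrix

theorem exists_extendMatrix_eq (J0 : V23 →ₗ[ℝ] V23) (hJ0 : ∀ x, J0 (J0 x) = -x) :
    ∃ M : Matrix (Fin 2) (Fin 2) ℝ, M * M = -1 ∧
      ∀ x (hx : x ∈ V23), extendMatrix M *ᵥ x = J0 ⟨x, hx⟩ := by
  let b := Module.Basis.ofEquivFun coordsV23
  refine ⟨LinearMap.toMatrixAlgEquiv b J0, ?_, fun x hx => ?_⟩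
  · have hsq : J0 * J0 = -1 := LinearMap.ext hJ0
    rw [← map_mul, hsq]
    exact (map_neg (LinearMap.toMatrixAlgEquiv b) 1).trans (congrArg _ (map_one _))
  · have hc : LinearMap.toMatrixAlgEquiv b J0 *ᵥ coordsV23 ⟨x, hx⟩ = coordsV23 (J0 ⟨x, hx⟩) := by
      have := LinearMap.toMatrix_mulVec_repr b b J0 ⟨x, hx⟩
      rwa [← b.equivFun_apply, ← b.equivFun_apply, Module.Basis.equivFun_ofEquivFun] at this
    obtain ⟨h0, h3, h4⟩ := mem_V23_iff.1 hx
    rw [← coordsV23.symm_apply_apply (J0 _), ← hc]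
    ext i
    fin_cases i <;>
      simp [extendMatrix, mulVec, dotProduct, Fin.sum_univ_five, coordsV23, h0, h3, h4]

theorem unique_invariant_complex_structure_extension
    (hA : ∀ x ∈ W0, Amat.mulVec x ∈ W0)
    (hB : ∀ x ∈ W0, Bmat.mulVec x ∈ W0)
    (J0 : V23 →ₗ[ℝ] V23) (hJ0 : ∀ x, J0 (J0 x) = -x) :
    ∃! J : W0 →ₗ[ℝ] W0,
      (∀ x, J (J x) = -x) ∧
      (∀ x : W0, ((J ⟨Amat.mulVec (x : Fin 5 → ℝ), hA _ x.2⟩ : W0) : Fin 5 → ℝ)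
          = Amat.mulVec ((J x : W0) : Fin 5 → ℝ)) ∧
      (∀ x : W0, ((J ⟨Bmat.mulVec (x : Fin 5 → ℝ), hB _ x.2⟩ : W0) : Fin 5 → ℝ)
          = Bmat.mulVec ((J x : W0) : Fin 5 → ℝ)) ∧
      (∀ (x : Fin 5 → ℝ) (h2 : x ∈ V23) (h0 : x ∈ W0),
          ((J ⟨x, h0⟩ : W0) : Fin 5 → ℝ) = ((J0 ⟨x, h2⟩ : V23) : Fin 5 → ℝ)) := by
  obtain ⟨M, hM, hMJ0⟩ := exists_extendMatrix_eq J0 hJ0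
  let J : W0 →ₗ[ℝ] W0 :=
    (extendMatrix M).mulVecLin.restrict fun x _ => extendMatrix_mulVec_mem_W0 M x
  refine ⟨J, ⟨fun x => Subtype.ext (extendMatrix_mulVec_mulVec M hM x.2),
    fun x => extendMatrix_mulVec_Amat_mulVec M x, fun x => extendMatrix_mulVec_Bmat_mulVec M x.2,
    fun x h2 _ => hMJ0 x h2⟩, ?_⟩
  rintro K ⟨-, -, hKB, hKJ0⟩
  exact LinearMap.ext_of_eqOn_of_commute (B := Bmat.mulVecLin) hB V23_le_W0
    W0_le_V23_sup_map_Bmat (fun x hx => hKB ⟨x, hx⟩)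
    (fun x hx => extendMatrix_mulVec_Bmat_mulVec M hx)
    fun x hx => Subtype.ext ((hKJ0 x hx _).trans (hMJ0 x hx).symm)
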